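/- Fix real numbers a < c < d. Then lim_{b→a+} ((√2+1)/π^{3/2})·(Γ(3/4)/Γ(1/4)) · (b−a)^{1/2}·(d−c)^{−1/2}·(d−a)^{−1/2}·(c−b)^{−1/2} · A(((b−a)(d−c))/((d−b)(c−a))) = (√2+1)/(π·(d−c)). -/

import Mathlib

/-!
Substituting `ζ = χ / u` turns `√χ · A(χ)` into `∫₀¹ max(0, 1 - χ/u) u^{-1/2} (1 - u)^{-3/4} du`,
which tends to the Beta integral `B(1/2, 1/4) = Γ(1/2) Γ(1/4) / Γ(3/4)` as `χ → 0+` by dominated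
convergence. The prefactor is `√χ / (d - c)` times a factor tending to `1`, and
`Γ(1/2) = √π` cancels the remaining Gamma values against `π^{3/2}`.
-/

/-- `A(χ) := ∫_χ^1 (1−ζ) ζ^{−3/4} (ζ−χ)^{−3/4} dζ`. -/
noncomputable def Aint (χ : ℝ) : ℝ :=
  ∫ ζ in χ..1, (1 - ζ) * ζ ^ (-(3/4) : ℝ) * (ζ - χ) ^ (-(3/4) : ℝ)

open MeasureTheory Real Filter Set Topology

lemma ofReal_rpow_mul_one_sub_rpow {α β x : ℝ} (hx : x ∈ Icc 0 1) :
    ((x ^ (α - 1) * (1 - x) ^ (β - 1) : ℝ) : ℂ)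
      = (x : ℂ) ^ ((α : ℂ) - 1) * (1 - (x : ℂ)) ^ ((β : ℂ) - 1) := by
  push_cast [Complex.ofReal_cpow hx.1, Complex.ofReal_cpow (sub_nonneg.2 hx.2)]
  rfl

lemma integrableOn_rpow_mul_one_sub_rpow {α β : ℝ} (hα : 0 < α) (hβ : 0 < β) :
    IntegrableOn (fun x : ℝ => x ^ (α - 1) * (1 - x) ^ (β - 1)) (Ioc 0 1) := by
  have h := Complex.betaIntegral_convergent (u := α) (v := β) (by simpa) (by simpa)
  rw [intervalIntegrable_iff_integrableOn_Ioc_of_le zero_le_one] at h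
  refine IntegrableOn.congr_fun h.re (fun x hx => ?_) measurableSet_Ioc
  rw [← ofReal_rpow_mul_one_sub_rpow (Ioc_subset_Icc_self hx)]
  exact Complex.ofReal_re _

lemma integral_rpow_mul_one_sub_rpow {α β : ℝ} (hα : 0 < α) (hβ : 0 < β) :
    ∫ x in Ioc 0 1, x ^ (α - 1) * (1 - x) ^ (β - 1) = ProbabilityTheory.beta α β := by
  have h : Complex.betaIntegral α β
      = ((∫ x in Ioc 0 1, x ^ (α - 1) * (1 - x) ^ (β - 1) : ℝ) : ℂ) := by
    rw [Complex.betaIntegral, intervalIntegral.integral_of_le zero_le_one,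
      ← integral_complex_ofReal]
    refine setIntegral_congr_fun measurableSet_Ioc fun x hx => ?_
    rw [ofReal_rpow_mul_one_sub_rpow (Ioc_subset_Icc_self hx)]
  rw [ProbabilityTheory.beta_eq_betaIntegralReal α β hα hβ, h, Complex.ofReal_re]

lemma integral_image_div_Ioc (f : ℝ → ℝ) {c : ℝ} (hc : 0 < c) :
    ∫ ζ in Ico c 1, f ζ = ∫ u in Ioc c 1, c / u ^ 2 * f (c / u) := by
  have himage : (c / ·) '' Ioc c 1 = Ico c 1 := by
    ext ζ
    constructor
    · rintro ⟨u, ⟨hcu, hu1⟩, rfl⟩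
      have hu : 0 < u := hc.trans hcu
      exact ⟨le_div_self hc.le hu hu1, (div_lt_one hu).2 hcu⟩
    · rintro ⟨hcζ, hζ1⟩
      have hζ : 0 < ζ := hc.trans_le hcζ
      refine ⟨c / ζ, ⟨(lt_div_iff₀ hζ).2 ?_, (div_le_one hζ).2 hcζ⟩, div_div_cancel₀ hc.ne'⟩
      nlinarith
  have hderiv : ∀ u ∈ Ioc c 1, HasDerivWithinAt (c / ·) (-(c / u ^ 2)) (Ioc c 1) u := by
    intro u hu
    simpa [div_eq_mul_inv] using
      (((hasDerivAt_inv (hc.trans hu.1).ne').const_mul c).hasDerivWithinAt (s := Ioc c 1))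
  have hinj : InjOn (c / ·) (Ioc c 1) := fun u _ v _ h =>
    inv_injective (mul_right_injective₀ hc.ne' (by simpa only [div_eq_mul_inv] using h))
  rw [← himage, integral_image_eq_integral_abs_deriv_smul measurableSet_Ioc hderiv hinj]
  refine setIntegral_congr_fun measurableSet_Ioc fun u hu => ?_
  rw [abs_neg, abs_of_pos (by have := hc.trans hu.1; positivity), smul_eq_mul]

lemma rpow_half_mul_inversion_integrand {χ u : ℝ} (hχ : 0 < χ) (hχu : χ < u) (hu : u ≤ 1) :
    χ ^ (1/2 : ℝ) *
        (χ / u ^ 2 * ((1 - χ / u) * (χ / u) ^ (-(3/4) : ℝ) * (χ / u - χ) ^ (-(3/4) : ℝ)))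
      = (1 - χ / u) * (u ^ ((1/2 : ℝ) - 1) * (1 - u) ^ ((1/4 : ℝ) - 1)) := by
  have hu0 : 0 < u := hχ.trans hχu
  have hχ_pow : χ ^ (1/2 : ℝ) * χ * (χ ^ (-(3/4) : ℝ) * χ ^ (-(3/4) : ℝ)) = 1 := by
    rw [← rpow_add hχ, ← rpow_add_one hχ.ne', ← rpow_add hχ]
    norm_num
  have hu_pow : (u ^ 2 * (u ^ (-(3/4) : ℝ) * u ^ (-(3/4) : ℝ)))⁻¹ = u ^ ((1/2 : ℝ) - 1) := by
    rw [← rpow_add hu0, ← rpow_natCast, ← rpow_add hu0, ← rpow_neg hu0.le]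
    norm_num
  calc _ = (1 - χ / u) * (χ ^ (1/2 : ℝ) * χ * (χ ^ (-(3/4) : ℝ) * χ ^ (-(3/4) : ℝ)))
          * (u ^ 2 * (u ^ (-(3/4) : ℝ) * u ^ (-(3/4) : ℝ)))⁻¹ * (1 - u) ^ (-(3/4) : ℝ) := by
        rw [show χ / u - χ = χ * (1 - u) / u by field_simp, div_rpow hχ.le hu0.le,
          div_rpow (by nlinarith) hu0.le, mul_rpow hχ.le (by linarith)]
        ring
    _ = _ := by
        rw [hχ_pow, hu_pow]
        norm_num
        ring

lemma rpow_half_mul_Aint {χ : ℝ} (hχ : 0 < χ) (hχ1 : χ < 1) :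
    χ ^ (1/2 : ℝ) * Aint χ
      = ∫ u in Ioc 0 1, max 0 (1 - χ / u) * (u ^ ((1/2 : ℝ) - 1) * (1 - u) ^ ((1/4 : ℝ) - 1)) := by
  set k : ℝ → ℝ := fun u => u ^ ((1/2 : ℝ) - 1) * (1 - u) ^ ((1/4 : ℝ) - 1)
  calc χ ^ (1/2 : ℝ) * Aint χ
      = ∫ u in Ioc χ 1, χ ^ (1/2 : ℝ) * (χ / u ^ 2 *
          ((1 - χ / u) * (χ / u) ^ (-(3/4) : ℝ) * (χ / u - χ) ^ (-(3/4) : ℝ))) := by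
        rw [Aint, intervalIntegral.integral_of_le hχ1.le, integral_Ioc_eq_integral_Ioo,
          ← integral_Ico_eq_integral_Ioo, integral_image_div_Ioc _ hχ, integral_const_mul]
    _ = ∫ u in Ioc χ 1, (1 - χ / u) * k u :=
        setIntegral_congr_fun measurableSet_Ioc fun u hu =>
          rpow_half_mul_inversion_integrand hχ hu.1 hu.2
    _ = ∫ u in Ioc 0 1, (Ioc χ 1).indicator (fun u => (1 - χ / u) * k u) u := by
        rw [setIntegral_indicator measurableSet_Ioc, Ioc_inter_Ioc, max_eq_right hχ.le, min_self]
    _ = _ := by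
        refine setIntegral_congr_fun measurableSet_Ioc fun u hu => ?_
        by_cases hχu : χ < u
        · rw [indicator_of_mem (show u ∈ Ioc χ 1 from ⟨hχu, hu.2⟩),
            max_eq_right (sub_nonneg.2 ((div_le_one hu.1).2 hχu.le))]
        · rw [indicator_of_notMem (fun h : u ∈ Ioc χ 1 => hχu h.1),
            max_eq_left (sub_nonpos.2 ((one_le_div hu.1).2 (not_lt.1 hχu))), zero_mul]

lemma tendsto_integral_max_zero_one_sub_div_mul {s : Set ℝ} {g : ℝ → ℝ} (hs : MeasurableSet s)
    (hs0 : s ⊆ Ioi 0) (hg : IntegrableOn g s) :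
    Tendsto (fun χ => ∫ u in s, max 0 (1 - χ / u) * g u) (𝓝[≥] 0) (𝓝 (∫ u in s, g u)) := by
  refine tendsto_integral_filter_of_dominated_convergence (fun u => ‖g u‖) ?_ ?_ hg.norm ?_
  · refine Eventually.of_forall fun χ => ?_
    exact (Measurable.aestronglyMeasurable (by fun_prop)).mul hg.aestronglyMeasurable
  · filter_upwards [self_mem_nhdsWithin] with χ (hχ : 0 ≤ χ)
    filter_upwards [ae_restrict_mem hs] with u hu
    have hu0 : 0 < u := hs0 hu
    rw [norm_mul]
    refine mul_le_of_le_one_left (norm_nonneg _) ?_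
    rw [Real.norm_of_nonneg (le_max_left _ _)]
    exact max_le zero_le_one (by linarith [div_nonneg hχ hu0.le])
  · refine ae_of_all _ fun u => ?_
    have h : Tendsto (fun χ => max 0 (1 - χ / u) * g u) (𝓝 0) (𝓝 (max 0 (1 - 0 / u) * g u)) :=
      ((continuous_const.max (continuous_const.sub (continuous_id.div_const u))).mul
        continuous_const).tendsto 0
    simpa using h.mono_left nhdsWithin_le_nhds

lemma tendsto_rpow_half_mul_Aint :
    Tendsto (fun χ => χ ^ (1/2 : ℝ) * Aint χ) (𝓝[>] 0)
      (𝓝 (ProbabilityTheory.beta (1/2) (1/4))) := by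
  rw [← integral_rpow_mul_one_sub_rpow (by norm_num) (by norm_num)]
  refine ((tendsto_integral_max_zero_one_sub_div_mul measurableSet_Ioc Ioc_subset_Ioi_self
    (integrableOn_rpow_mul_one_sub_rpow (by norm_num) (by norm_num))).mono_left
    (nhdsWithin_mono _ Ioi_subset_Ici_self)).congr' ?_
  filter_upwards [Ioo_mem_nhdsGT one_pos] with χ hχ
  exact (rpow_half_mul_Aint hχ.1 hχ.2).symm

lemma Gamma_div_Gamma_mul_beta_half_quarter :
    Real.Gamma (3/4) / Real.Gamma (1/4) * ProbabilityTheory.beta (1/2) (1/4) = √π := by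
  have h1 : Real.Gamma (1/4) ≠ 0 := (Real.Gamma_pos_of_pos (by norm_num)).ne'
  have h3 : Real.Gamma (3/4) ≠ 0 := (Real.Gamma_pos_of_pos (by norm_num)).ne'
  rw [ProbabilityTheory.beta, Real.Gamma_one_half_eq, show (1/2 : ℝ) + 1/4 = 3/4 by norm_num]
  field_simp

lemma tendsto_crossRatio_nhdsGT {a c d : ℝ} (hac : a < c) (hcd : c < d) :
    Tendsto (fun b => (b - a) * (d - c) / ((d - b) * (c - a))) (𝓝[>] a) (𝓝[>] 0) := by
  refine tendsto_nhdsWithin_of_tendsto_nhds_of_eventually_within _ ?_ ?_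
  · have h : ContinuousAt (fun b => (b - a) * (d - c) / ((d - b) * (c - a))) a :=
      ContinuousAt.div (by fun_prop) (by fun_prop) (by nlinarith)
    simpa using h.tendsto.mono_left nhdsWithin_le_nhds
  · filter_upwards [Ioo_mem_nhdsGT hac] with b ⟨hab, hbc⟩
    exact div_pos (mul_pos (sub_pos.2 hab) (sub_pos.2 hcd))
      (mul_pos (sub_pos.2 (hbc.trans hcd)) (sub_pos.2 hac))

lemma rpow_half_prefactor_eq {a b c d : ℝ} (hab : a < b) (hbc : b < c) (hcd : c < d) :
    (b - a) ^ ((1/2) : ℝ) * (d - c) ^ (-(1/2) : ℝ) * (d - a) ^ (-(1/2) : ℝ) *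
        (c - b) ^ (-(1/2) : ℝ)
      = ((d - b) * (c - a) / ((d - a) * (c - b))) ^ (1/2 : ℝ) / (d - c) *
        ((b - a) * (d - c) / ((d - b) * (c - a))) ^ (1/2 : ℝ) := by
  have hba := sub_pos.2 hab
  have hcb := sub_pos.2 hbc
  have hdc := sub_pos.2 hcd
  have hdb : 0 < d - b := by linarith
  have hca : 0 < c - a := by linarith
  have hda : 0 < d - a := by linarith
  rw [div_mul_eq_mul_div, ← mul_rpow (by positivity) (by positivity),
    show (d - b) * (c - a) / ((d - a) * (c - b)) * ((b - a) * (d - c) / ((d - b) * (c - a)))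
      = (b - a) * (d - c) / ((d - a) * (c - b)) by field_simp]
  rw [div_rpow (by positivity) (by positivity), mul_rpow hba.le hdc.le, mul_rpow hda.le hcb.le,
    rpow_neg hdc.le, rpow_neg hda.le, rpow_neg hcb.le]
  have : (d - c) ^ (1/2 : ℝ) ≠ 0 := (rpow_pos_of_pos hdc _).ne'
  have : (d - a) ^ (1/2 : ℝ) ≠ 0 := (rpow_pos_of_pos hda _).ne'
  have : (c - b) ^ (1/2 : ℝ) ≠ 0 := (rpow_pos_of_pos hcb _).ne'
  field_simp
  rw [← sqrt_eq_rpow, sq_sqrt hdc.le]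

/-- Fix real numbers a < c < d. Then
lim_{b→a+} ((√2+1)/π^{3/2})·(Γ(3/4)/Γ(1/4)) · (b−a)^{1/2}·(d−c)^{−1/2}·(d−a)^{−1/2}·(c−b)^{−1/2}
  · A(((b−a)(d−c))/((d−b)(c−a))) = (√2+1)/(π·(d−c)). -/
theorem stmt12 (a c d : ℝ) (hac : a < c) (hcd : c < d) :
    Filter.Tendsto
      (fun b : ℝ => (Real.sqrt 2 + 1) / Real.pi ^ ((3 : ℝ)/2) *
        (Real.Gamma (3/4) / Real.Gamma (1/4)) *
        ((b - a) ^ ((1/2) : ℝ) * (d - c) ^ (-(1/2) : ℝ) * (d - a) ^ (-(1/2) : ℝ) *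
          (c - b) ^ (-(1/2) : ℝ)) *
        Aint (((b - a) * (d - c)) / ((d - b) * (c - a))))
      (nhdsWithin a (Set.Ioi a))
      (nhds ((Real.sqrt 2 + 1) / (Real.pi * (d - c)))) := by
  have hratio : Tendsto (fun b => ((d - b) * (c - a) / ((d - a) * (c - b))) ^ (1/2 : ℝ))
      (𝓝[>] a) (𝓝 1) := by
    have h : ContinuousAt (fun b => ((d - b) * (c - a) / ((d - a) * (c - b))) ^ (1/2 : ℝ)) a :=
      (ContinuousAt.div (by fun_prop) (by fun_prop) (by nlinarith)).rpow_const
        (Or.inr (by norm_num))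
    have h1 : (d - a) * (c - a) / ((d - a) * (c - a)) = 1 := div_self (by nlinarith)
    simpa [h1] using h.tendsto.mono_left nhdsWithin_le_nhds
  have hA := tendsto_rpow_half_mul_Aint.comp (tendsto_crossRatio_nhdsGT hac hcd)
  have hlim : (√2 + 1) / π ^ ((3 : ℝ)/2) * (Real.Gamma (3/4) / Real.Gamma (1/4)) * (1 / (d - c))
      * ProbabilityTheory.beta (1/2) (1/4) = (√2 + 1) / (π * (d - c)) := by
    rw [mul_right_comm, mul_assoc _ (Real.Gamma _ / _), Gamma_div_Gamma_mul_beta_half_quarter,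
      show (3 : ℝ) / 2 = 1 + 1/2 by norm_num, rpow_add pi_pos, rpow_one, ← sqrt_eq_rpow]
    have : √π ≠ 0 := (sqrt_pos.2 pi_pos).ne'
    field_simp
  rw [← hlim]
  refine ((tendsto_const_nhds.mul (hratio.div_const (d - c))).mul hA).congr' ?_
  filter_upwards [Ioo_mem_nhdsGT hac] with b ⟨hab, hbc⟩
  rw [rpow_half_prefactor_eq hab hbc hcd, Function.comp_apply]
  ring
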